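/- arXiv:math/9805006 — 4 statements merged into one kernel-verified Lean document; each statement's English description precedes it below -/
import Mathlib

section
/- Let K be a field of characteristic zero, let Q be a primary ideal of the polynomial ring K[x,s] (where x = (x_1,...,x_n) and s = (s_1,...,s_d) are two groups of variables), and let p be a point of K^n. Define B(Q,p) to be the set of polynomials b(s) in K[s] such that there exists a(x) in K[x] with a(p) ≠ 0 and a(x)·b(s) ∈ Q. If p lies in the zero set of Q ∩ K[x] (i.e., f(p) = 0 for every f ∈ Q ∩ K[x]), then B(Q,p) = Q ∩ K[s]; otherwise B(Q,p) = K[s]. -/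
/-!
If `p` is a zero of `Q ∩ K[x]` and `a(p) ≠ 0`, then no power of `a` lies in `Q`, i.e. `a ∉ √Q`,
so primality of `Q` cancels `a` from `a·b ∈ Q`. If instead some `f ∈ Q ∩ K[x]` has `f(p) ≠ 0`,
then `a = f` witnesses every `b`.
-/

open MvPolynomial

theorem Ideal.IsPrimary.mem_of_mul_mem_of_notMem_radical {R : Type*} [CommSemiring R]
    {Q : Ideal R} (hQ : Q.IsPrimary) {a b : R} (hab : a * b ∈ Q) (ha : a ∉ Q.radical) :
    b ∈ Q :=
  ((Ideal.isPrimary_iff.mp hQ).2 (mul_comm a b ▸ hab)).resolve_right ha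

theorem notMem_radical_of_forall_mem_imp_eq_zero {F G A R S : Type*} [Monoid A]
    [CommSemiring R] [MonoidWithZero S] [IsReduced S] [FunLike F A R] [MonoidHomClass F A R]
    [FunLike G A S] [MonoidHomClass G A S] (φ : F) (χ : G) {Q : Ideal R}
    (hχ : ∀ f, φ f ∈ Q → χ f = 0) {a : A} (ha : χ a ≠ 0) : φ a ∉ Q.radical := by
  rintro ⟨k, hk⟩
  rw [← map_pow] at hk
  exact ha (IsNilpotent.eq_zero ⟨k, by rw [← map_pow, hχ _ hk]⟩)

theorem stmt_0_general {K : Type} [Field K] (n d : ℕ)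
    (Q : Ideal (MvPolynomial (Fin n ⊕ Fin d) K)) (hQ : Q.IsPrimary)
    (p : Fin n → K) :
    ((∀ f : MvPolynomial (Fin n) K,
        (rename Sum.inl f : MvPolynomial (Fin n ⊕ Fin d) K) ∈ Q → eval p f = 0) →
      {b : MvPolynomial (Fin d) K | ∃ a : MvPolynomial (Fin n) K, eval p a ≠ 0 ∧
          (rename Sum.inl a : MvPolynomial (Fin n ⊕ Fin d) K) * rename Sum.inr b ∈ Q}
        = {b : MvPolynomial (Fin d) K |
            (rename Sum.inr b : MvPolynomial (Fin n ⊕ Fin d) K) ∈ Q}) ∧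
    ((¬ ∀ f : MvPolynomial (Fin n) K,
        (rename Sum.inl f : MvPolynomial (Fin n ⊕ Fin d) K) ∈ Q → eval p f = 0) →
      {b : MvPolynomial (Fin d) K | ∃ a : MvPolynomial (Fin n) K, eval p a ≠ 0 ∧
          (rename Sum.inl a : MvPolynomial (Fin n ⊕ Fin d) K) * rename Sum.inr b ∈ Q}
        = Set.univ) := by
  refine ⟨fun hp => Set.ext fun b => ⟨?_, fun hb => ⟨1, by simp, by simpa using hb⟩⟩, ?_⟩
  · rintro ⟨a, ha, hab⟩
    exact hQ.mem_of_mul_mem_of_notMem_radical hab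
      (notMem_radical_of_forall_mem_imp_eq_zero (rename Sum.inl) (eval p) hp ha)
  · intro hp
    push Not at hp
    obtain ⟨f, hfQ, hfp⟩ := hp
    exact Set.eq_univ_of_forall fun b => ⟨f, hfp, Q.mul_mem_right _ hfQ⟩

/-- For a primary ideal `Q` of `K[x,s]` and a point `p ∈ K^n`,
`B(Q,p) = {b ∈ K[s] | ∃ a ∈ K[x], a(p) ≠ 0, a·b ∈ Q}` equals `Q ∩ K[s]`
if `p` lies in the zero set of `Q ∩ K[x]`, and equals all of `K[s]` otherwise. -/
theorem stmt_0 {K : Type} [Field K] [CharZero K] (n d : ℕ)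
    (Q : Ideal (MvPolynomial (Fin n ⊕ Fin d) K)) (hQ : Q.IsPrimary)
    (p : Fin n → K) :
    ((∀ f : MvPolynomial (Fin n) K,
        (rename Sum.inl f : MvPolynomial (Fin n ⊕ Fin d) K) ∈ Q → eval p f = 0) →
      {b : MvPolynomial (Fin d) K | ∃ a : MvPolynomial (Fin n) K, eval p a ≠ 0 ∧
          (rename Sum.inl a : MvPolynomial (Fin n ⊕ Fin d) K) * rename Sum.inr b ∈ Q}
        = {b : MvPolynomial (Fin d) K |
            (rename Sum.inr b : MvPolynomial (Fin n ⊕ Fin d) K) ∈ Q}) ∧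
    ((¬ ∀ f : MvPolynomial (Fin n) K,
        (rename Sum.inl f : MvPolynomial (Fin n ⊕ Fin d) K) ∈ Q → eval p f = 0) →
      {b : MvPolynomial (Fin d) K | ∃ a : MvPolynomial (Fin n) K, eval p a ≠ 0 ∧
          (rename Sum.inl a : MvPolynomial (Fin n ⊕ Fin d) K) * rename Sum.inr b ∈ Q}
        = Set.univ) :=
  stmt_0_general n d Q hQ p
end

section
/- Let K be an algebraically closed field and J an ideal of K[x,s] where x = (x_1,...,x_n), s = (s_1,...,s_d). For p ∈ K^n define B(J,p) := { b ∈ K[s] : ∃ a ∈ K[x], a(p) ≠ 0, a·b ∈ J }. Then the intersection of B(J,p) over all points p ∈ K^n equals J ∩ K[s]. -/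
open MvPolynomial

/-- For an ideal `J` of `K[x,s]` with `K` algebraically closed,
the intersection over all `p ∈ K^n` of
`B(J,p) = {b ∈ K[s] | ∃ a ∈ K[x], a(p) ≠ 0, a·b ∈ J}` equals `J ∩ K[s]`. -/
theorem stmt_1 {K : Type} [Field K] [IsAlgClosed K] (n d : ℕ)
    (J : Ideal (MvPolynomial (Fin n ⊕ Fin d) K)) :
    (⋂ p : Fin n → K,
      {b : MvPolynomial (Fin d) K | ∃ a : MvPolynomial (Fin n) K, eval p a ≠ 0 ∧
        (rename Sum.inl a : MvPolynomial (Fin n ⊕ Fin d) K) * rename Sum.inr b ∈ J})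
      = {b : MvPolynomial (Fin d) K |
          (rename Sum.inr b : MvPolynomial (Fin n ⊕ Fin d) K) ∈ J} := by
  ext b
  simp only [Set.mem_iInter, Set.mem_setOf_eq]
  constructor
  · intro h
    -- the ideal of multipliers
    let I : Ideal (MvPolynomial (Fin n) K) :=
      { carrier := {a | (rename Sum.inl a : MvPolynomial (Fin n ⊕ Fin d) K) *
          rename Sum.inr b ∈ J}
        add_mem' := by
          intro x y hx hy
          simp only [Set.mem_setOf_eq, map_add, add_mul] at *
          exact J.add_mem hx hy
        zero_mem' := by
          simp only [Set.mem_setOf_eq, map_zero, zero_mul]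
          exact J.zero_mem
        smul_mem' := by
          intro c x hx
          simp only [Set.mem_setOf_eq, smul_eq_mul, map_mul, mul_assoc] at *
          exact J.mul_mem_left _ hx }
    have hzl : MvPolynomial.zeroLocus K I = ∅ := by
      rw [Set.eq_empty_iff_forall_notMem]
      intro p hp
      obtain ⟨a, ha, haJ⟩ := h p
      exact ha (by simpa [MvPolynomial.coe_aeval_eq_eval] using (MvPolynomial.mem_zeroLocus_iff.mp hp) a haJ)
    have hrad : I.radical = ⊤ := by
      rw [← MvPolynomial.vanishingIdeal_zeroLocus_eq_radical (K := K), hzl,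
        MvPolynomial.vanishingIdeal_empty]
    have hI : I = ⊤ := Ideal.radical_eq_top.mp hrad
    have h1 : (1 : MvPolynomial (Fin n) K) ∈ I := hI.symm ▸ Submodule.mem_top
    have h2 : (rename Sum.inl (1 : MvPolynomial (Fin n) K) :
        MvPolynomial (Fin n ⊕ Fin d) K) * rename Sum.inr b ∈ J := h1
    simpa using h2
  · intro hb p
    exact ⟨1, by simp, by simp only [map_one, one_mul]; exact hb⟩
end

section
/- Let A_1 = K⟨t,∂⟩ be the Weyl algebra in one variable over a field K of characteristic zero, and let L be a left A_1-module with a decomposition L = ⊕_{j∈ℤ} L_j into additive subgroups such that t·L_j ⊆ L_{j-1} and ∂·L_j ⊆ L_{j+1}. Suppose there is a nonzero polynomial b(θ) ∈ K[θ] with b(t∂ + j)·u = 0 for all u ∈ L_j and all j ∈ ℤ. If k ∈ ℤ satisfies b(k) ≠ 0, then the map t : L_{k+1} → L_k is bijective. -/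
open Polynomial

lemma aeval_mem_aux {K M : Type} [Field K] [AddCommGroup M] [Module K M]
    (A : Module.End K M) (S : Submodule K M) (hA : ∀ u ∈ S, A u ∈ S)
    (p : K[X]) : ∀ u ∈ S, (aeval A p) u ∈ S := by
  induction p using Polynomial.induction_on' with
  | add p q hp hq =>
    intro u hu
    rw [map_add]
    exact S.add_mem (hp u hu) (hq u hu)
  | monomial n a =>
    intro u hu
    have hpow : ∀ m : ℕ, (A ^ m) u ∈ S := by
      intro m
      induction m with
      | zero => simpa using hu
      | succ m ih =>
        rw [pow_succ']
        exact hA _ ih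
    rw [aeval_monomial]
    have : (algebraMap K (Module.End K M) a * A ^ n) u = a • ((A ^ n) u) := by
      simp [Module.algebraMap_end_eq_smul_id, Module.End.mul_apply]
    rw [this]
    exact S.smul_mem _ (hpow n)

/-- Let `L = ⊕_{j∈ℤ} L_j` be a module over the Weyl algebra `A_1 = K⟨t,∂⟩`
(encoded via two operators `T`, `D` with `D*T - T*D = 1`) such that `t·L_j ⊆ L_{j-1}`,
`∂·L_j ⊆ L_{j+1}`, and `b(t∂ + j)` annihilates `L_j` for a nonzero polynomial `b`.
If `b(k) ≠ 0` then `t : L_{k+1} → L_k` is bijective. -/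
theorem stmt_2 {K : Type} [Field K] [CharZero K] {M : Type} [AddCommGroup M] [Module K M]
    (T D : Module.End K M) (hTD : D * T - T * D = 1)
    (L : ℤ → Submodule K M) (hdec : DirectSum.IsInternal L)
    (hT : ∀ j : ℤ, ∀ u ∈ L j, T u ∈ L (j - 1))
    (hD : ∀ j : ℤ, ∀ u ∈ L j, D u ∈ L (j + 1))
    (b : Polynomial K) (hb : b ≠ 0)
    (hbL : ∀ j : ℤ, ∀ u ∈ L j,
      (Polynomial.aeval (T * D + (j : K) • (1 : Module.End K M)) b) u = 0)
    (k : ℤ) (hk : Polynomial.eval (k : K) b ≠ 0) :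
    Set.BijOn T (L (k + 1) : Set M) (L k : Set M) := by
  set c : K[X] := b /ₘ (X - C (k : K)) with hc
  have hbeq : (X - C (k : K)) * c + C (b.eval (k : K)) = b := by
    have h := modByMonic_add_div b (X - C (k : K))
    rw [modByMonic_X_sub_C_eq_C_eval] at h
    rw [add_comm]
    exact h
  have hbeq' : c * (X - C (k : K)) + C (b.eval (k : K)) = b := by
    rw [mul_comm]; exact hbeq
  have h1 : D * T = T * D + 1 := by
    rw [← hTD]; abel
  -- maps to
  have hmapsTo : Set.MapsTo T (L (k + 1) : Set M) (L k : Set M) := by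
    intro u hu
    have := hT (k + 1) u hu
    simpa using this
  -- injectivity core
  have hinj0 : ∀ u ∈ L (k + 1), T u = 0 → u = 0 := by
    intro u hu hTu
    set A : Module.End K M := T * D + ((k + 1 : ℤ) : K) • (1 : Module.End K M) with hA
    have h0 : (aeval A b) u = 0 := hbL (k + 1) u hu
    have hDT : A - algebraMap K (Module.End K M) (k : K) = D * T := by
      rw [hA, Module.algebraMap_end_eq_smul_id, ← Module.End.one_eq_id]
      push_cast
      rw [add_smul, one_smul, h1]
      abel
    have hfac : aeval A b = aeval A c * (D * T) + (b.eval (k : K)) • (1 : Module.End K M) := by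
      conv_lhs => rw [← hbeq']
      rw [map_add, map_mul, map_sub, aeval_X, aeval_C, hDT, aeval_C,
        Module.algebraMap_end_eq_smul_id, ← Module.End.one_eq_id]
    rw [hfac] at h0
    simp only [LinearMap.add_apply, Module.End.mul_apply, LinearMap.smul_apply,
      Module.End.one_apply] at h0
    rw [hTu, map_zero, map_zero, zero_add] at h0
    rcases smul_eq_zero.mp h0 with h | h
    · exact absurd h hk
    · exact h
  -- injOn
  have hinjOn : Set.InjOn T (L (k + 1) : Set M) := by
    intro u hu v hv huv
    have hsub : u - v ∈ L (k + 1) := (L (k + 1)).sub_mem hu hv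
    have hz : T (u - v) = 0 := by rw [map_sub, huv, sub_self]
    exact sub_eq_zero.mp (hinj0 (u - v) hsub hz)
  -- surjOn
  have hsurjOn : Set.SurjOn T (L (k + 1) : Set M) (L k : Set M) := by
    intro v hv
    set A : Module.End K M := T * D + ((k : ℤ) : K) • (1 : Module.End K M) with hA
    have h0 : (aeval A b) v = 0 := hbL k v hv
    have hTDA : A - algebraMap K (Module.End K M) (k : K) = T * D := by
      rw [hA, Module.algebraMap_end_eq_smul_id, ← Module.End.one_eq_id]
      abel
    have hfac : aeval A b = (T * D) * aeval A c + (b.eval (k : K)) • (1 : Module.End K M) := by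
      conv_lhs => rw [← hbeq]
      rw [map_add, map_mul, map_sub, aeval_X, aeval_C, hTDA, aeval_C,
        Module.algebraMap_end_eq_smul_id, ← Module.End.one_eq_id]
    rw [hfac] at h0
    simp only [LinearMap.add_apply, Module.End.mul_apply, LinearMap.smul_apply,
      Module.End.one_apply] at h0
    -- membership of aeval A c v in L k
    have hAstab : ∀ u ∈ L k, A u ∈ L k := by
      intro u hu
      have h1' : (T * D) u ∈ L k := by
        have := hT (k + 1) (D u) (hD k u hu)
        simpa using this
      have h2 : (((k : ℤ) : K) • (1 : Module.End K M)) u ∈ L k := by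
        simpa using (L k).smul_mem ((k : ℤ) : K) hu
      simpa [hA] using (L k).add_mem h1' h2
    have hcv : (aeval A c) v ∈ L k := aeval_mem_aux A (L k) hAstab c v hv
    have hDcv : D ((aeval A c) v) ∈ L (k + 1) := hD k _ hcv
    refine ⟨(-(b.eval (k : K))⁻¹) • D ((aeval A c) v),
      (L (k + 1)).smul_mem _ hDcv, ?_⟩
    rw [map_smul]
    have hval : T (D ((aeval A c) v)) = -((b.eval (k : K)) • v) := by
      rw [eq_neg_iff_add_eq_zero]
      exact h0
    rw [hval, smul_neg, neg_smul, neg_neg, smul_smul, inv_mul_cancel₀ hk, one_smul]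
  exact ⟨hmapsTo, hinjOn, hsurjOn⟩
end

section
/- Let A_d = K[t_1,...,t_d]⟨∂_{t_1},...,∂_{t_d}⟩ be the Weyl algebra over a field K of characteristic zero, and let L = ⊕_{j∈ℤ} L_j be a graded module over the associated graded ring of A_d with respect to the filtration by ord(∂) − ord(t) (so that t_i·L_j ⊆ L_{j-1} and ∂_{t_i}·L_j ⊆ L_{j+1}). Assume there is a nonzero b(θ) ∈ K[θ] with b(ϑ + j)·L_j = 0 for all j, where ϑ = t_1∂_{t_1} + ⋯ + t_d∂_{t_d}. If b(k) ≠ 0 for an integer k, then the Koszul complex K^•(L_•[k], t_1,...,t_d), whose term in degree −j is L_{k+j} ⊗ Λ^j ℤ^d with differential δ(u ⊗ e_{i_1}∧⋯∧e_{i_j}) = Σ_l t_l u ⊗ e_l ∧ e_{i_1}∧⋯∧e_{i_j}, is exact. -/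
/-!
Let `δ` be the Koszul differential of the `T i` and `κ` the dual one built from the `D i`.
From `[D i, T j] = δ_ij` one gets `δκ + κδ = ϑ + (d - n)` on `n`-cochains. The entries of an
`n`-cochain lie in `L_{k+d-n}`, so there this operator is `φ - k` with `φ = ϑ + (k + d - n)`.
Since `b(φ)` kills `L_{k+d-n}` and `b(k) ≠ 0`, a Bézout relation `r (X - k) + s b = 1` makes
`r(φ)` an inverse of `φ - k` on that piece. From `ϑ T_i = T_i (ϑ + 1)`, the operator `r(φ)`
commutes with `δ` up to the shift of degree. So for a cocycle `f` the cochain `r(φ) f` is again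
a cocycle, and `δ κ r(φ) f = (φ - k) r(φ) f = f`. For `n = 0` there are no `(n - 1)`-cochains,
so `f = 0`.
-/

noncomputable section

/-- The Koszul differential associated with commuting operators `T 1, …, T d` on `M`,
in the basis of `Λ^j ℤ^d` given by `j`-element subsets of `{1,…,d}`. -/
def kosDelta {K : Type} [Field K] {M : Type} [AddCommGroup M] [Module K M]
    (d : ℕ) (T : Fin d → Module.End K M)
    (j : ℕ) (f : {S : Finset (Fin d) // S.card = j} → M) :
    {S : Finset (Fin d) // S.card = j + 1} → M :=
  fun S => ∑ l ∈ S.1.attach,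
    ((-1 : ℤ) ^ (({x ∈ S.1 | x < l.1} : Finset (Fin d)).card)) •
      (T l.1 (f ⟨S.1.erase l.1, by simp [Finset.card_erase_of_mem l.2, S.2]⟩))

end

open Finset

section KoszulSign

variable {ι : Type*} [LinearOrder ι]

def koszulSign (A : Finset ι) (a : ι) : ℤ := (-1) ^ #{x ∈ A | x < a}

lemma koszulSign_insert {A : Finset ι} {b : ι} (hb : b ∉ A) (a : ι) :
    koszulSign (insert b A) a = (if b < a then -1 else 1) * koszulSign A a := by
  unfold koszulSign
  rw [filter_insert]
  split_ifs
  · rw [card_insert_of_notMem (by simp [hb]), pow_succ, mul_comm]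
  · rw [one_mul]

lemma koszulSign_insert_self (A : Finset ι) (a : ι) :
    koszulSign (insert a A) a = koszulSign A a := by
  unfold koszulSign
  rw [filter_insert, if_neg (lt_irrefl a)]

lemma koszulSign_erase_self (A : Finset ι) (a : ι) :
    koszulSign (A.erase a) a = koszulSign A a := by
  unfold koszulSign
  rw [filter_erase, erase_eq_of_notMem (by simp)]

lemma koszulSign_mul_self (A : Finset ι) (a : ι) : koszulSign A a * koszulSign A a = 1 := by
  rw [koszulSign, ← pow_add, Even.neg_one_pow ⟨_, rfl⟩]

lemma koszulSign_mul_koszulSign_erase {A : Finset ι} {l m : ι} (hl : l ∈ A) (hm : m ∉ A) :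
    koszulSign A l * koszulSign (A.erase l) m =
      -(koszulSign A m * koszulSign (insert m A) l) := by
  have hlm : l ≠ m := ne_of_mem_of_not_mem hl hm
  obtain ⟨B, hlB, rfl⟩ : ∃ B, l ∉ B ∧ A = insert l B :=
    ⟨A.erase l, notMem_erase l A, (insert_erase hl).symm⟩
  rw [koszulSign_insert hm, koszulSign_insert_self, erase_insert hlB, koszulSign_insert hlB]
  rcases hlm.lt_or_gt with h | h <;> simp [h, h.not_gt, mul_comm]

end KoszulSign

section KoszulOperators

variable {ι : Type*} [LinearOrder ι]
  {R : Type*} [Semiring R] {M : Type*} [AddCommGroup M] [Module R M]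

def koszulUp (T : ι → Module.End R M) (F : Finset ι → M) (A : Finset ι) : M :=
  ∑ l ∈ A, koszulSign A l • T l (F (A.erase l))

lemma koszulUp_map {T : ι → Module.End R M} {P Q : Module.End R M}
    (hPQ : ∀ i, Q * T i = T i * P) (F : Finset ι → M) (A : Finset ι) :
    koszulUp T (fun B => P (F B)) A = Q (koszulUp T F A) := by
  simp only [koszulUp, map_sum, map_zsmul, ← Module.End.mul_apply, hPQ]

variable [Fintype ι]

def koszulDown (D : ι → Module.End R M) (F : Finset ι → M) (A : Finset ι) : M :=
  ∑ m ∈ Aᶜ, koszulSign A m • D m (F (insert m A))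

variable (T D : ι → Module.End R M)

lemma koszulUp_koszulDown (F : Finset ι → M) (A : Finset ι) :
    koszulUp T (koszulDown D F) A = ∑ l ∈ A, T l (D l (F A)) +
      ∑ l ∈ A, ∑ m ∈ Aᶜ, (koszulSign A l * koszulSign (A.erase l) m) •
        T l (D m (F (insert m (A.erase l)))) := by
  rw [← sum_add_distrib]
  refine sum_congr rfl fun l hl => ?_
  have hcompl : (A.erase l)ᶜ = insert l Aᶜ := by
    ext x
    by_cases hx : x = l <;> simp [hx]
  simp only [koszulDown, hcompl, sum_insert (notMem_compl.2 hl), map_add, map_sum, map_zsmul,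
    smul_add, smul_sum, smul_smul, koszulSign_erase_self, koszulSign_mul_self, one_smul,
    insert_erase hl]

lemma koszulDown_koszulUp (F : Finset ι → M) (A : Finset ι) :
    koszulDown D (koszulUp T F) A = ∑ m ∈ Aᶜ, D m (T m (F A)) +
      ∑ m ∈ Aᶜ, ∑ l ∈ A, (koszulSign A m * koszulSign (insert m A) l) •
        D m (T l (F ((insert m A).erase l))) := by
  rw [← sum_add_distrib]
  refine sum_congr rfl fun m hm => ?_
  have hmA : m ∉ A := mem_compl.1 hm
  simp only [koszulUp, sum_insert hmA, map_add, map_sum, map_zsmul, smul_add, smul_sum,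
    smul_smul, koszulSign_insert_self, koszulSign_mul_self, one_smul, erase_insert hmA]

theorem koszulUp_koszulDown_add_koszulDown_koszulUp
    (hDT : ∀ i j, D i * T j - T j * D i = if i = j then 1 else 0)
    (F : Finset ι → M) (A : Finset ι) :
    koszulUp T (koszulDown D F) A + koszulDown D (koszulUp T F) A =
      ∑ i, T i (D i (F A)) + #Aᶜ • F A := by
  have hDT_self (i : ι) (x : M) : D i (T i x) = T i (D i x) + x := by
    simpa [sub_eq_iff_eq_add, add_comm] using LinearMap.congr_fun (hDT i i) x
  have hDT_ne {i j : ι} (h : i ≠ j) (x : M) : D i (T j x) = T j (D i x) := by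
    simpa [h, sub_eq_zero] using LinearMap.congr_fun (hDT i j) x
  have hcross : ∑ l ∈ A, ∑ m ∈ Aᶜ, (koszulSign A l * koszulSign (A.erase l) m) •
        T l (D m (F (insert m (A.erase l)))) +
      ∑ m ∈ Aᶜ, ∑ l ∈ A, (koszulSign A m * koszulSign (insert m A) l) •
        D m (T l (F ((insert m A).erase l))) = 0 := by
    rw [sum_comm (s := Aᶜ), ← sum_add_distrib]
    refine sum_eq_zero fun l hl => ?_
    rw [← sum_add_distrib]
    refine sum_eq_zero fun m hm => ?_
    have hml : m ≠ l := (ne_of_mem_of_not_mem hl (mem_compl.1 hm)).symm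
    rw [koszulSign_mul_koszulSign_erase hl (mem_compl.1 hm), hDT_ne hml,
      erase_insert_of_ne hml, neg_smul, neg_add_cancel]
  rw [koszulUp_koszulDown, koszulDown_koszulUp]
  simp only [hDT_self, sum_add_distrib, sum_const, ← sum_add_sum_compl A]
  linear_combination (norm := abel) hcross

end KoszulOperators

section Polynomial

open Polynomial

lemma Polynomial.aeval_mul_of_mul_eq {R A : Type*} [CommSemiring R] [Semiring A] [Algebra R A]
    {a b t : A} (h : a * t = t * b) (p : R[X]) : aeval a p * t = t * aeval b p := by
  have hpow (i : ℕ) : a ^ i * t = t * b ^ i := (SemiconjBy.pow_right h.symm i).symm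
  simp only [aeval_eq_sum_range, sum_mul, mul_sum, smul_mul_assoc, mul_smul_comm, hpow]

variable {K : Type*} [Field K] {M : Type*} [AddCommGroup M] [Module K M]

lemma Module.End.sub_smul_aeval_eq_self_of_aeval_eq_zero {φ : Module.End K M} {a : K}
    {p r s : K[X]} (hrs : r * (X - C a) + s * p = 1) {x : M} (hx : aeval φ p x = 0) :
    φ (aeval φ r x) - a • aeval φ r x = x := by
  have h := LinearMap.congr_fun (congrArg (aeval φ) hrs) x
  rw [mul_comm r] at h
  simpa [Module.End.mul_apply, hx, Algebra.algebraMap_eq_smul_one] using h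

end Polynomial

section Euler

variable {ι : Type*} [Fintype ι] {R : Type*} [CommSemiring R] {M : Type*} [AddCommGroup M]
  [Module R M] (T D : ι → Module.End R M)

def eulerOperator : Module.End R M := ∑ i, T i * D i

lemma eulerOperator_add_smul_one_mul [DecidableEq ι] (hTT : ∀ i j, T i * T j = T j * T i)
    (hDT : ∀ i j, D i * T j - T j * D i = if i = j then 1 else 0) (c : R) (i : ι) :
    (eulerOperator T D + c • 1) * T i = T i * (eulerOperator T D + (c + 1) • 1) := by
  have hDT' (j : ι) : D j * T i = T i * D j + if j = i then 1 else 0 := by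
    rw [← hDT j i, add_sub_cancel]
  have hterm (j : ι) : T j * D j * T i = T i * (T j * D j) + if j = i then T j else 0 := by
    rw [mul_assoc, hDT', mul_add, mul_ite, mul_one, mul_zero, ← mul_assoc, hTT, mul_assoc]
  simp only [eulerOperator, add_mul, mul_add, sum_mul, mul_sum, hterm, sum_add_distrib,
    sum_ite_eq', mem_univ, if_true, add_smul, one_smul, smul_mul_assoc, mul_smul_comm, one_mul,
    mul_one]
  abel

variable {T D} (L : ℤ → Submodule R M)

lemma eulerOperator_apply_mem (hT : ∀ (i : ι) (j : ℤ), ∀ u ∈ L j, T i u ∈ L (j - 1))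
    (hD : ∀ (i : ι) (j : ℤ), ∀ u ∈ L j, D i u ∈ L (j + 1)) {m : ℤ} {u : M}
    (hu : u ∈ L m) :
    eulerOperator T D u ∈ L m := by
  simp only [eulerOperator, LinearMap.sum_apply, Module.End.mul_apply]
  exact Submodule.sum_mem _ fun i _ => by simpa using hT i _ _ (hD i m u hu)

end Euler

section GradedKoszul

open Polynomial

variable {ι : Type*} [LinearOrder ι] [Fintype ι] {K : Type*} [Field K] {M : Type*}
  [AddCommGroup M] [Module K M] {T D : ι → Module.End K M}

theorem exists_koszulUp_eq_of_koszulUp_eq_zero (hTT : ∀ i j, T i * T j = T j * T i)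
    (hDT : ∀ i j, D i * T j - T j * D i = if i = j then 1 else 0)
    (L : ℤ → Submodule K M)
    (hT : ∀ (i : ι) (j : ℤ), ∀ u ∈ L j, T i u ∈ L (j - 1))
    (hD : ∀ (i : ι) (j : ℤ), ∀ u ∈ L j, D i u ∈ L (j + 1))
    (b : K[X]) (hbL : ∀ j : ℤ, ∀ u ∈ L j, aeval (eulerOperator T D + (j : K) • 1) b u = 0)
    (k : ℤ) (hk : b.eval (k : K) ≠ 0) (n : ℕ) (F : Finset ι → M)
    (hF : ∀ A, F A ∈ L (k + Fintype.card ι - n))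
    (hF_closed : ∀ A : Finset ι, #A = n + 1 → koszulUp T F A = 0) :
    ∃ G : Finset ι → M, (∀ A, G A ∈ L (k + Fintype.card ι - n + 1)) ∧
      ∀ A : Finset ι, #A = n → koszulUp T G A = F A := by
  set m : ℤ := k + Fintype.card ι - n
  obtain ⟨r, s, hrs⟩ : IsCoprime (X - C (k : K)) b :=
    (irreducible_X_sub_C _).coprime_iff_not_dvd.2 (by rwa [dvd_iff_isRoot])
  set φ : Module.End K M := eulerOperator T D + (m : K) • 1
  set H : Finset ι → M := fun A => aeval φ r (F A)
  have hH_mem (A : Finset ι) : H A ∈ L m := by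
    refine aeval_apply_smul_mem_of_le_comap (hF A) r φ fun u hu => ?_
    exact Submodule.add_mem _ (eulerOperator_apply_mem L hT hD hu) (Submodule.smul_mem _ _ hu)
  have hH_closed (A : Finset ι) (hA : #A = n + 1) : koszulUp T H A = 0 := by
    have hshift (i : ι) :
        aeval (eulerOperator T D + ((m - 1 : ℤ) : K) • 1) r * T i = T i * aeval φ r := by
      refine aeval_mul_of_mul_eq ?_ r
      rw [eulerOperator_add_smul_one_mul T D hTT hDT, Int.cast_sub, Int.cast_one, sub_add_cancel]
    rw [koszulUp_map hshift, hF_closed A hA, map_zero]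
  refine ⟨koszulDown D H, fun A => ?_, fun A hA => ?_⟩
  · exact Submodule.sum_mem _ fun i _ => Submodule.smul_of_tower_mem _ _ (hD i m _ (hH_mem _))
  · have hdown : koszulDown D (koszulUp T H) A = 0 :=
      sum_eq_zero fun i hi => by
        rw [hH_closed _ (by rw [card_insert_of_notMem (mem_compl.1 hi), hA]), map_zero, smul_zero]
    have hcard : (#Aᶜ : K) = m - k := by
      rw [card_compl, hA, Nat.cast_sub (hA ▸ card_le_univ A)]
      push_cast [m]
      ring
    have := koszulUp_koszulDown_add_koszulDown_koszulUp T D hDT H A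
    rw [hdown, add_zero] at this
    rw [this, ← Module.End.sub_smul_aeval_eq_self_of_aeval_eq_zero hrs (hbL m (F A) (hF A)),
      ← Nat.cast_smul_eq_nsmul K, hcard, sub_smul]
    simp only [φ, LinearMap.add_apply, LinearMap.smul_apply, Module.End.one_apply, eulerOperator,
      LinearMap.sum_apply, Module.End.mul_apply, H]
    abel

end GradedKoszul

section Restriction

variable {K : Type} [Field K] {M : Type} [AddCommGroup M] [Module K M] {d : ℕ}

def extendByZero {n : ℕ} (f : {S : Finset (Fin d) // S.card = n} → M) (A : Finset (Fin d)) :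
    M :=
  if h : A.card = n then f ⟨A, h⟩ else 0

lemma extendByZero_val {n : ℕ} (f : {S : Finset (Fin d) // S.card = n} → M)
    (S : {S : Finset (Fin d) // S.card = n}) : extendByZero f S.1 = f S :=
  dif_pos S.2

lemma extendByZero_mem {n : ℕ} {f : {S : Finset (Fin d) // S.card = n} → M} {N : Submodule K M}
    (hf : ∀ S, f S ∈ N) (A : Finset (Fin d)) : extendByZero f A ∈ N := by
  unfold extendByZero
  split_ifs
  exacts [hf _, N.zero_mem]

lemma kosDelta_eq_koszulUp (T : Fin d → Module.End K M) {j : ℕ}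
    (f : {S : Finset (Fin d) // S.card = j} → M) (F : Finset (Fin d) → M)
    (hfF : ∀ S, f S = F S.1) (S : {S : Finset (Fin d) // S.card = j + 1}) :
    kosDelta d T j f S = koszulUp T F S.1 := by
  simp only [kosDelta, koszulUp, koszulSign, hfF]
  exact sum_attach S.1 fun l => (-1 : ℤ) ^ #{x ∈ S.1 | x < l} • T l (F (S.1.erase l))

lemma koszulUp_extendByZero_eq_zero {T : Fin d → Module.End K M} {n : ℕ}
    {f : {S : Finset (Fin d) // S.card = n} → M} (hf : kosDelta d T n f = 0)
    (A : Finset (Fin d)) (hA : #A = n + 1) : koszulUp T (extendByZero f) A = 0 := by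
  rw [← kosDelta_eq_koszulUp T f _ (fun S => (extendByZero_val f S).symm) ⟨A, hA⟩, hf]
  rfl

end Restriction

theorem stmt_3_general {K : Type} [Field K] {M : Type} [AddCommGroup M] [Module K M]
    (d : ℕ) (T D : Fin d → Module.End K M)
    (hTT : ∀ i j, T i * T j = T j * T i)
    (hDT : ∀ i j, D i * T j - T j * D i = if i = j then 1 else 0)
    (L : ℤ → Submodule K M)
    (hT : ∀ (i : Fin d) (j : ℤ), ∀ u ∈ L j, T i u ∈ L (j - 1))
    (hD : ∀ (i : Fin d) (j : ℤ), ∀ u ∈ L j, D i u ∈ L (j + 1))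
    (b : Polynomial K)
    (hbL : ∀ j : ℤ, ∀ u ∈ L j,
      (Polynomial.aeval ((∑ i, T i * D i) + (j : K) • (1 : Module.End K M)) b) u = 0)
    (k : ℤ) (hk : Polynomial.eval (k : K) b ≠ 0) :
    (∀ f : {S : Finset (Fin d) // S.card = 0} → M,
        (∀ S, f S ∈ L (k + d)) → kosDelta d T 0 f = 0 → f = 0) ∧
    (∀ j : ℕ, j < d → ∀ f : {S : Finset (Fin d) // S.card = j + 1} → M,
        (∀ S, f S ∈ L (k + d - (j + 1))) → kosDelta d T (j + 1) f = 0 →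
        ∃ g : {S : Finset (Fin d) // S.card = j} → M,
          (∀ S, g S ∈ L (k + d - j)) ∧ kosDelta d T j g = f) := by
  refine ⟨fun f hf hδ => ?_, fun j _ f hf hδ => ?_⟩
  · obtain ⟨G, -, hG⟩ := exists_koszulUp_eq_of_koszulUp_eq_zero hTT hDT L hT hD b hbL k hk 0
      (extendByZero f) (extendByZero_mem (by simpa using hf)) (koszulUp_extendByZero_eq_zero hδ)
    funext S
    rw [← extendByZero_val f S, ← hG S.1 S.2, card_eq_zero.1 S.2]
    rfl
  · obtain ⟨G, hG_mem, hG⟩ := exists_koszulUp_eq_of_koszulUp_eq_zero hTT hDT L hT hD b hbL k hk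
      (j + 1) (extendByZero f) (extendByZero_mem (by simpa using hf))
      (koszulUp_extendByZero_eq_zero hδ)
    refine ⟨fun S => G S.1, fun S => ?_, funext fun S => ?_⟩
    · convert hG_mem S.1 using 2
      push_cast [Fintype.card_fin]
      ring
    · rw [kosDelta_eq_koszulUp T _ G (fun _ => rfl), hG S.1 S.2, extendByZero_val]

/-- Let `L = ⊕_{j∈ℤ} L_j` be a graded module over `gr(A_d)` (encoded by
commuting operators `T i` of degree `-1` and `D i` of degree `+1` with
`[D i, T j] = δ_ij`).  Assume `b(ϑ + j)` kills `L_j` for a nonzero polynomial `b`, where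
`ϑ = Σ T i ∘ D i`.  If `b(k) ≠ 0` then the Koszul complex
`K^•(L_•[k], t_1, …, t_d)`, with term `L_{k+d-j} ⊗ Λ^j ℤ^d` in degree `-j`, is exact. -/
theorem stmt_3 {K : Type} [Field K] [CharZero K] {M : Type} [AddCommGroup M] [Module K M]
    (d : ℕ) (T D : Fin d → Module.End K M)
    (hTT : ∀ i j, T i * T j = T j * T i)
    (hDD : ∀ i j, D i * D j = D j * D i)
    (hDT : ∀ i j, D i * T j - T j * D i = if i = j then 1 else 0)
    (L : ℤ → Submodule K M) (hdec : DirectSum.IsInternal L)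
    (hT : ∀ (i : Fin d) (j : ℤ), ∀ u ∈ L j, T i u ∈ L (j - 1))
    (hD : ∀ (i : Fin d) (j : ℤ), ∀ u ∈ L j, D i u ∈ L (j + 1))
    (b : Polynomial K) (hb : b ≠ 0)
    (hbL : ∀ j : ℤ, ∀ u ∈ L j,
      (Polynomial.aeval ((∑ i, T i * D i) + (j : K) • (1 : Module.End K M)) b) u = 0)
    (k : ℤ) (hk : Polynomial.eval (k : K) b ≠ 0) :
    (∀ f : {S : Finset (Fin d) // S.card = 0} → M,
        (∀ S, f S ∈ L (k + d)) → kosDelta d T 0 f = 0 → f = 0) ∧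
    (∀ j : ℕ, j < d → ∀ f : {S : Finset (Fin d) // S.card = j + 1} → M,
        (∀ S, f S ∈ L (k + d - (j + 1))) → kosDelta d T (j + 1) f = 0 →
        ∃ g : {S : Finset (Fin d) // S.card = j} → M,
          (∀ S, g S ∈ L (k + d - j)) ∧ kosDelta d T j g = f) :=
  stmt_3_general d T D hTT hDT L hT hD b hbL k hk
end
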